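/- arXiv:1401.0081 — 6 statements merged into one kernel-verified Lean document; each statement's English description precedes it below -/
import Mathlib

section
/- If Q ⪯ 0 (negative semidefinite), then the optimal value of the SDP: maximize Q̃ • Y subject to eᵀYe ≤ 1, Y_{i,n+i} = 0 for i = 1,...,n, Y ≥ 0 componentwise, and Y ⪰ 0, equals 0, where Q̃ = [[Q, -Q], [-Q, Q]]. -/
/-!
With `P = [I, -I]` we have `Q̃ = Pᴴ Q P`, so `Q̃ • Y = tr (Q (P Y Pᴴ))` is the trace of the product
of the negative semidefinite `Q` with a positive semidefinite matrix, hence `≤ 0`; `Y = 0`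
attains `0`.
-/

open Matrix

namespace Matrix

open scoped ComplexOrder

theorem PosSemidef.trace_mul_nonneg {𝕜 n : Type*} [RCLike 𝕜] [Fintype n]
    {A B : Matrix n n 𝕜} (hA : A.PosSemidef) (hB : B.PosSemidef) : 0 ≤ (A * B).trace := by
  classical
  open scoped MatrixOrder in
  obtain ⟨C, rfl⟩ := CStarAlgebra.nonneg_iff_eq_star_mul_self.mp hA.nonneg
  rw [star_eq_conjTranspose, Matrix.mul_assoc, trace_mul_comm]
  exact (hB.mul_mul_conjTranspose_same C).trace_nonneg

theorem fromBlocks_self_neg_neg_self {α n : Type*} [Ring α] [StarRing α] [Fintype n]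
    [DecidableEq n] (A : Matrix n n α) :
    fromBlocks A (-A) (-A) A =
      (fromCols (1 : Matrix n n α) (-1))ᴴ * A * (fromCols 1 (-1) : Matrix n (n ⊕ n) α) := by
  rw [conjTranspose_fromCols_eq_fromRows_conjTranspose, fromRows_mul, fromRows_mul_fromCols]
  simp

end Matrix

theorem stmt_4_general (n : ℕ) (Q : Matrix (Fin n) (Fin n) ℝ)
    (hQ : (-Q).PosSemidef)
    (Qt : Matrix (Fin n ⊕ Fin n) (Fin n ⊕ Fin n) ℝ)
    (hQt : Qt = Matrix.fromBlocks Q (-Q) (-Q) Q) :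
    IsGreatest {v : ℝ | ∃ Y : Matrix (Fin n ⊕ Fin n) (Fin n ⊕ Fin n) ℝ,
        (∑ i, ∑ j, Y i j) ≤ 1 ∧
        (∀ i : Fin n, Y (Sum.inl i) (Sum.inr i) = 0) ∧
        (∀ i j, 0 ≤ Y i j) ∧ Y.PosSemidef ∧
        v = Matrix.trace (Qt * Y)} 0 := by
  refine ⟨⟨0, by simp, by simp, by simp, .zero, by simp⟩, ?_⟩
  rintro v ⟨Y, -, -, -, hY, rfl⟩
  obtain ⟨P, hQtP⟩ : ∃ P : Matrix (Fin n) (Fin n ⊕ Fin n) ℝ, Qt = Pᴴ * Q * P :=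
    ⟨_, hQt.trans (fromBlocks_self_neg_neg_self Q)⟩
  have hTrace : (Qt * Y).trace = -((-Q) * (P * Y * Pᴴ)).trace := by
    rw [hQtP, Matrix.neg_mul, trace_neg, neg_neg, Matrix.mul_assoc, Matrix.mul_assoc,
      trace_mul_comm, Matrix.mul_assoc, Matrix.mul_assoc]
  rw [hTrace, neg_nonpos]
  exact hQ.trace_mul_nonneg (hY.mul_mul_conjTranspose_same P)

theorem stmt_4 (n : ℕ) (Q : Matrix (Fin n) (Fin n) ℝ)
    (hQsym : Q.IsSymm) (hQ : (-Q).PosSemidef)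
    (Qt : Matrix (Fin n ⊕ Fin n) (Fin n ⊕ Fin n) ℝ)
    (hQt : Qt = Matrix.fromBlocks Q (-Q) (-Q) Q) :
    IsGreatest {v : ℝ | ∃ Y : Matrix (Fin n ⊕ Fin n) (Fin n ⊕ Fin n) ℝ,
        (∑ i, ∑ j, Y i j) ≤ 1 ∧
        (∀ i : Fin n, Y (Sum.inl i) (Sum.inr i) = 0) ∧
        (∀ i j, 0 ≤ Y i j) ∧ Y.PosSemidef ∧
        v = Matrix.trace (Qt * Y)} 0 :=
  stmt_4_general n Q hQ Qt hQt
end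

section
/- The optimal value of the SDP relaxation DNN_{L1}^{new}: maximize Q̃ • Y over symmetric 2n×2n matrices Y with eᵀYe ≤ 1, Y_{i,n+i} = 0 for all i, Y ≥ 0 componentwise, Y ⪰ 0, is at most the optimal value of DNN_{L1}: maximize Q̃ • Y over Y with eᵀYe = 1, Y ≥ 0 componentwise, Y ⪰ 0 (here considering the supremum of each feasible set, and assuming the DNN_{L1}^{new} optimum is attained). -/
/-!
Let `Y` attain the optimum of the new relaxation. If `Q̃ • Y > 0`, then `Y ≠ 0`, so
`0 < eᵀYe ≤ 1` and `Y / eᵀYe` is feasible for `DNN_{L1}` with the larger value `Q̃ • Y / eᵀYe`.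
If `Q̃ • Y ≤ 0`, it suffices that `DNN_{L1}` has a feasible point of value `0`: take `vvᵀ` with
`v = (e₀/2, e₀/2)`, which lies in the kernel of `Q̃`.
-/

open Matrix

/-- The set of objective values of `DNN_{L1}` for the objective matrix `A`. -/
def dnnValues {ι : Type*} [Fintype ι] (A : Matrix ι ι ℝ) : Set ℝ :=
  {v : ℝ | ∃ Y : Matrix ι ι ℝ, (∑ i, ∑ j, Y i j) = 1 ∧ (∀ i j, 0 ≤ Y i j) ∧ Y.PosSemidef ∧
    v = Matrix.trace (A * Y)}

section dnnValues

variable {ι : Type*} [Fintype ι]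

theorem trace_mul_eq_sum_sum (A Y : Matrix ι ι ℝ) :
    trace (A * Y) = ∑ i, ∑ j, A i j * Y j i := by
  simp [trace, mul_apply]

theorem le_sum_sum_of_nonneg {Y : Matrix ι ι ℝ} (hY : ∀ i j, 0 ≤ Y i j) (i j : ι) :
    Y i j ≤ ∑ k, ∑ l, Y k l :=
  (Finset.single_le_sum (fun l _ => hY i l) (Finset.mem_univ j)).trans
    (Finset.single_le_sum (f := fun k => ∑ l, Y k l)
      (fun k _ => Finset.sum_nonneg fun l _ => hY k l) (Finset.mem_univ i))

theorem eq_zero_of_sum_sum_eq_zero {Y : Matrix ι ι ℝ} (hY : ∀ i j, 0 ≤ Y i j)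
    (h : ∑ i, ∑ j, Y i j = 0) : Y = 0 := by
  ext i j
  exact le_antisymm (h ▸ le_sum_sum_of_nonneg hY i j :) (hY i j)

theorem bddAbove_dnnValues (A : Matrix ι ι ℝ) : BddAbove (dnnValues A) := by
  refine ⟨∑ i, ∑ j, |A i j|, ?_⟩
  rintro _ ⟨Y, hsum, hY, -, rfl⟩
  rw [trace_mul_eq_sum_sum]
  gcongr with i _ j _
  calc A i j * Y j i ≤ |A i j| * Y j i := mul_le_mul_of_nonneg_right (le_abs_self _) (hY j i)
    _ ≤ |A i j| := mul_le_of_le_one_right (abs_nonneg _) (hsum ▸ le_sum_sum_of_nonneg hY j i)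

theorem div_sum_sum_mem_dnnValues (A : Matrix ι ι ℝ) {Y : Matrix ι ι ℝ}
    (hY : ∀ i j, 0 ≤ Y i j) (hpsd : Y.PosSemidef) (hs : 0 < ∑ i, ∑ j, Y i j) :
    trace (A * Y) / ∑ i, ∑ j, Y i j ∈ dnnValues A := by
  set s := ∑ i, ∑ j, Y i j
  refine ⟨s⁻¹ • Y, ?_, fun i j => mul_nonneg (inv_nonneg.2 hs.le) (hY i j),
    hpsd.smul (inv_nonneg.2 hs.le), ?_⟩
  · simp only [Matrix.smul_apply, smul_eq_mul, ← Finset.mul_sum]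
    exact inv_mul_cancel₀ hs.ne'
  · rw [Matrix.mul_smul, trace_smul, smul_eq_mul, div_eq_inv_mul]

theorem zero_mem_dnnValues_of_mulVec_eq_zero {A : Matrix ι ι ℝ} {v : ι → ℝ}
    (hAv : A *ᵥ v = 0) (hv : 0 ≤ v) (hsum : ∑ i, v i = 1) : 0 ∈ dnnValues A := by
  refine ⟨vecMulVec v v, ?_, fun i j => mul_nonneg (hv i) (hv j), ?_, ?_⟩
  · simp only [vecMulVec_apply, ← Finset.mul_sum, ← Finset.sum_mul, hsum, one_mul]
  · simpa using posSemidef_vecMulVec_self_star v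
  · rw [mul_vecMulVec, hAv, zero_vecMulVec, trace_zero]

end dnnValues

theorem fromBlocks_neg_mulVec_sum_elim_self {n : Type*} [Fintype n] (Q : Matrix n n ℝ)
    (u : n → ℝ) : fromBlocks Q (-Q) (-Q) Q *ᵥ Sum.elim u u = 0 := by
  simp [fromBlocks_mulVec, neg_mulVec]

theorem stmt_5_general (n : ℕ) (hn : 0 < n) (Q : Matrix (Fin n) (Fin n) ℝ)
    (Qt : Matrix (Fin n ⊕ Fin n) (Fin n ⊕ Fin n) ℝ)
    (hQt : Qt = Matrix.fromBlocks Q (-Q) (-Q) Q)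
    (m : ℝ)
    (hm : IsGreatest {v : ℝ | ∃ Y : Matrix (Fin n ⊕ Fin n) (Fin n ⊕ Fin n) ℝ,
        (∑ i, ∑ j, Y i j) ≤ 1 ∧
        (∀ i : Fin n, Y (Sum.inl i) (Sum.inr i) = 0) ∧
        (∀ i j, 0 ≤ Y i j) ∧ Y.PosSemidef ∧
        v = Matrix.trace (Qt * Y)} m) :
    m ≤ sSup {v : ℝ | ∃ Y : Matrix (Fin n ⊕ Fin n) (Fin n ⊕ Fin n) ℝ,
        (∑ i, ∑ j, Y i j) = 1 ∧
        (∀ i j, 0 ≤ Y i j) ∧ Y.PosSemidef ∧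
        v = Matrix.trace (Qt * Y)} := by
  change m ≤ sSup (dnnValues Qt)
  obtain ⟨Y, hsum, -, hY, hpsd, rfl⟩ := hm.1
  rcases le_or_gt (trace (Qt * Y)) 0 with hle | hpos
  · have h0 : (0 : ℝ) ∈ dnnValues Qt := by
      set u : Fin n → ℝ := Pi.single ⟨0, hn⟩ (1 / 2)
      refine zero_mem_dnnValues_of_mulVec_eq_zero (v := Sum.elim u u)
        (hQt ▸ fromBlocks_neg_mulVec_sum_elim_self Q u) ?_ ?_
      · have hu : 0 ≤ u := Pi.single_nonneg.2 (by norm_num)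
        rintro (i | i) <;> exact hu i
      · norm_num [u, Fintype.sum_sum_type]
    exact hle.trans (le_csSup (bddAbove_dnnValues Qt) h0)
  · have hs : 0 < ∑ i, ∑ j, Y i j := by
      refine (Finset.sum_nonneg fun i _ => Finset.sum_nonneg fun j _ => hY i j).lt_of_ne' ?_
      rintro hs
      simp [eq_zero_of_sum_sum_eq_zero hY hs] at hpos
    calc trace (Qt * Y) ≤ trace (Qt * Y) / ∑ i, ∑ j, Y i j := le_div_self hpos.le hs hsum
      _ ≤ sSup (dnnValues Qt) :=
        le_csSup (bddAbove_dnnValues Qt) (div_sum_sum_mem_dnnValues Qt hY hpsd hs)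

theorem stmt_5 (n : ℕ) (hn : 0 < n) (Q : Matrix (Fin n) (Fin n) ℝ) (hQsym : Q.IsSymm)
    (Qt : Matrix (Fin n ⊕ Fin n) (Fin n ⊕ Fin n) ℝ)
    (hQt : Qt = Matrix.fromBlocks Q (-Q) (-Q) Q)
    (m : ℝ)
    (hm : IsGreatest {v : ℝ | ∃ Y : Matrix (Fin n ⊕ Fin n) (Fin n ⊕ Fin n) ℝ,
        (∑ i, ∑ j, Y i j) ≤ 1 ∧
        (∀ i : Fin n, Y (Sum.inl i) (Sum.inr i) = 0) ∧
        (∀ i j, 0 ≤ Y i j) ∧ Y.PosSemidef ∧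
        v = Matrix.trace (Qt * Y)} m) :
    m ≤ sSup {v : ℝ | ∃ Y : Matrix (Fin n ⊕ Fin n) (Fin n ⊕ Fin n) ℝ,
        (∑ i, ∑ j, Y i j) = 1 ∧
        (∀ i j, 0 ≤ Y i j) ∧ Y.PosSemidef ∧
        v = Matrix.trace (Qt * Y)} :=
  stmt_5_general n hn Q Qt hQt m hm
end

section
/- Suppose all diagonal entries of Q are nonnegative. If Y* is feasible for DNN_{L1} (i.e., eᵀY*e = 1, Y* ≥ 0, Y* ⪰ 0), then there exists Ỹ with eᵀỸe = 1, Ỹ ≥ 0, Ỹ ⪰ 0, Ỹ_{i,n+i} = 0 for all i = 1,...,n, and Q̃ • Ỹ ≥ Q̃ • Y*. -/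
/-!
Add to `Y` the matrix `Z = ∑ᵢ δᵢ (eᵢ - e_{n+i})(eᵢ - e_{n+i})ᵀ` with `δᵢ = Y_{i,n+i} ≥ 0`.
It is positive semidefinite, its entries sum to zero, it cancels the entries `Y_{i,n+i}` and
`Y_{n+i,i}` while only enlarging the others, and `Q̃ • Z = 4 ∑ᵢ Qᵢᵢ δᵢ ≥ 0`.
-/

open Matrix

namespace Matrix

variable {ι R : Type*} [DecidableEq ι] [Ring R]

def pairDifference (d : ι → R) : Matrix (ι ⊕ ι) (ι ⊕ ι) R :=
  fromBlocks (diagonal d) (-diagonal d) (-diagonal d) (diagonal d)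

section Fintype

variable [Fintype ι] (d : ι → R)

theorem sum_pairDifference_apply : ∑ i, ∑ j, pairDifference d i j = 0 := by
  simp [pairDifference, Fintype.sum_sum_type, diagonal_apply]

theorem trace_fromBlocks_mul_pairDifference (Q : Matrix ι ι R) :
    trace (fromBlocks Q (-Q) (-Q) Q * pairDifference d) = 4 * ∑ i, Q i i * d i := by
  simp only [pairDifference, fromBlocks_multiply, trace, Fintype.sum_sum_type, diag_apply,
    fromBlocks_apply₁₁, fromBlocks_apply₂₂, add_apply, mul_neg, neg_mul, neg_neg, mul_diagonal,
    Finset.sum_add_distrib]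
  noncomm_ring

theorem pairDifference_eq_conjTranspose_mul_mul [StarRing R] :
    pairDifference d = (fromCols (1 : Matrix ι ι R) (-1 : Matrix ι ι R))ᴴ * diagonal d *
      fromCols (1 : Matrix ι ι R) (-1 : Matrix ι ι R) := by
  rw [conjTranspose_fromCols_eq_fromRows_conjTranspose, fromRows_mul, fromRows_mul_fromCols]
  simp [pairDifference]

theorem posSemidef_pairDifference [PartialOrder R] [StarRing R] [StarOrderedRing R]
    {d : ι → R} (hd : 0 ≤ d) : (pairDifference d).PosSemidef := by
  rw [pairDifference_eq_conjTranspose_mul_mul]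
  exact (PosSemidef.diagonal hd).conjTranspose_mul_mul_same _

end Fintype

theorem add_pairDifference_apply_nonneg [PartialOrder R] [IsOrderedAddMonoid R]
    {Y : Matrix (ι ⊕ ι) (ι ⊕ ι) R} (hY : Y.IsSymm) (hnonneg : ∀ i j, 0 ≤ Y i j) (i j : ι ⊕ ι) :
    0 ≤ (Y + pairDifference fun k => Y (.inl k) (.inr k)) i j := by
  rcases i with a | a <;> rcases j with b | b <;> rcases eq_or_ne a b with rfl | hab <;>
    simp [pairDifference, hY.apply, *, add_nonneg]

theorem add_pairDifference_apply_inl_inr (Y : Matrix (ι ⊕ ι) (ι ⊕ ι) R) (i : ι) :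
    (Y + pairDifference fun k => Y (.inl k) (.inr k)) (.inl i) (.inr i) = 0 := by
  simp [pairDifference]

end Matrix

theorem stmt_8_general (n : ℕ) (Q : Matrix (Fin n) (Fin n) ℝ)
    (hdiag : ∀ i, 0 ≤ Q i i)
    (Qt : Matrix (Fin n ⊕ Fin n) (Fin n ⊕ Fin n) ℝ)
    (hQt : Qt = Matrix.fromBlocks Q (-Q) (-Q) Q)
    (Y : Matrix (Fin n ⊕ Fin n) (Fin n ⊕ Fin n) ℝ)
    (hsum : (∑ i, ∑ j, Y i j) = 1)
    (hnonneg : ∀ i j, 0 ≤ Y i j) (hpsd : Y.PosSemidef) :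
    ∃ Yt : Matrix (Fin n ⊕ Fin n) (Fin n ⊕ Fin n) ℝ,
      (∑ i, ∑ j, Yt i j) = 1 ∧
      (∀ i j, 0 ≤ Yt i j) ∧ Yt.PosSemidef ∧
      (∀ i : Fin n, Yt (Sum.inl i) (Sum.inr i) = 0) ∧
      Matrix.trace (Qt * Y) ≤ Matrix.trace (Qt * Yt) := by
  set δ : Fin n → ℝ := fun k => Y (.inl k) (.inr k)
  have hδ : 0 ≤ δ := fun k => hnonneg _ _
  refine ⟨Y + pairDifference δ, ?_, add_pairDifference_apply_nonneg ?_ hnonneg,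
    hpsd.add (posSemidef_pairDifference hδ), add_pairDifference_apply_inl_inr Y, ?_⟩
  · simp only [Matrix.add_apply, Finset.sum_add_distrib, hsum, sum_pairDifference_apply, add_zero]
  · exact isHermitian_iff_isSymm.mp hpsd.1
  · have hQδ : 0 ≤ ∑ i, Q i i * δ i := Finset.sum_nonneg fun i _ => mul_nonneg (hdiag i) (hδ i)
    rw [mul_add, trace_add, hQt, trace_fromBlocks_mul_pairDifference]
    linarith

theorem stmt_8 (n : ℕ) (Q : Matrix (Fin n) (Fin n) ℝ) (hQsym : Q.IsSymm)
    (hdiag : ∀ i, 0 ≤ Q i i)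
    (Qt : Matrix (Fin n ⊕ Fin n) (Fin n ⊕ Fin n) ℝ)
    (hQt : Qt = Matrix.fromBlocks Q (-Q) (-Q) Q)
    (Y : Matrix (Fin n ⊕ Fin n) (Fin n ⊕ Fin n) ℝ)
    (hsum : (∑ i, ∑ j, Y i j) = 1)
    (hnonneg : ∀ i j, 0 ≤ Y i j) (hpsd : Y.PosSemidef) :
    ∃ Yt : Matrix (Fin n ⊕ Fin n) (Fin n ⊕ Fin n) ℝ,
      (∑ i, ∑ j, Yt i j) = 1 ∧
      (∀ i j, 0 ≤ Yt i j) ∧ Yt.PosSemidef ∧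
      (∀ i : Fin n, Yt (Sum.inl i) (Sum.inr i) = 0) ∧
      Matrix.trace (Qt * Y) ≤ Matrix.trace (Qt * Yt) :=
  stmt_8_general n Q hdiag Qt hQt Y hsum hnonneg hpsd
end

section
/- If diag(Q) ≥ 0 (all diagonal entries nonnegative) and both SDP optima are attained, then the optimal value of DNN_{L1} (maximize Q̃ • Y s.t. eᵀYe = 1, Y ≥ 0, Y ⪰ 0) equals the optimal value of DNN_{L1}^{new} (maximize Q̃ • Y s.t. eᵀYe ≤ 1, Y_{i,n+i} = 0 for all i, Y ≥ 0, Y ⪰ 0). -/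
/-!
Write `C(d) = [[D, -D], [-D, D]]` with `D = diagonal d`; it equals `[I, -I]ᵀ D [I, -I]`, so it is
PSD for `d ≥ 0`, its entries sum to `0`, and `Q̃ • C(d) = 4 ∑ₖ Qₖₖ dₖ`. For `Y` feasible in
`DNN_{L1}`, choosing `dₖ = Y_{k,n+k}` makes `Y + C(d)` feasible in `DNN_{L1}^{new}` with an
objective at least as large, since `diag Q ≥ 0`. Conversely, a feasible `Z` of `DNN_{L1}^{new}`
becomes feasible in `DNN_{L1}` after adding the slack `1 - eᵀZe` to one diagonal entry, which
again does not decrease the objective.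
-/

open Matrix

section PairCorrection

variable {ι : Type*} [DecidableEq ι]

def pairCorrection (d : ι → ℝ) : Matrix (ι ⊕ ι) (ι ⊕ ι) ℝ :=
  fromBlocks (diagonal d) (-diagonal d) (-diagonal d) (diagonal d)

theorem pairCorrection_eq_conjTranspose_mul_mul [Fintype ι] (d : ι → ℝ) :
    pairCorrection d =
      (fromCols (1 : Matrix ι ι ℝ) (-1))ᴴ * diagonal d * fromCols (1 : Matrix ι ι ℝ) (-1) := by
  simp [pairCorrection, conjTranspose_eq_transpose_of_trivial, transpose_fromCols]

theorem posSemidef_pairCorrection [Fintype ι] {d : ι → ℝ} (hd : 0 ≤ d) :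
    (pairCorrection d).PosSemidef := by
  rw [pairCorrection_eq_conjTranspose_mul_mul]
  exact (PosSemidef.diagonal hd).conjTranspose_mul_mul_same _

theorem sum_pairCorrection [Fintype ι] (d : ι → ℝ) : ∑ i, ∑ j, pairCorrection d i j = 0 := by
  simp [pairCorrection, Fintype.sum_sum_type, diagonal_apply]

theorem trace_fromBlocks_mul_pairCorrection [Fintype ι] (Q : Matrix ι ι ℝ) (d : ι → ℝ) :
    trace (fromBlocks Q (-Q) (-Q) Q * pairCorrection d) = 4 * ∑ k, Q k k * d k := by
  simp only [trace, pairCorrection, diagonal_neg, fromBlocks_multiply, neg_mul, diag_apply,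
    Fintype.sum_sum_type, fromBlocks_apply₁₁, Matrix.add_apply, mul_diagonal, Matrix.neg_apply,
    mul_neg, neg_neg, fromBlocks_apply₂₂, ← Finset.sum_add_distrib, Finset.mul_sum]
  exact Finset.sum_congr rfl fun k _ => by ring

def zeroPairs (Y : Matrix (ι ⊕ ι) (ι ⊕ ι) ℝ) : Matrix (ι ⊕ ι) (ι ⊕ ι) ℝ :=
  Y + pairCorrection fun k => Y (.inl k) (.inr k)

theorem zeroPairs_inl_inr (Y : Matrix (ι ⊕ ι) (ι ⊕ ι) ℝ) (i : ι) :
    zeroPairs Y (.inl i) (.inr i) = 0 := by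
  simp [zeroPairs, pairCorrection]

theorem zeroPairs_nonneg {Y : Matrix (ι ⊕ ι) (ι ⊕ ι) ℝ} (hsymm : Y.IsSymm)
    (hY : ∀ i j, 0 ≤ Y i j) (i j : ι ⊕ ι) : 0 ≤ zeroPairs Y i j := by
  rcases i with i | i <;> rcases j with j | j <;> by_cases h : i = j <;>
    simp [zeroPairs, pairCorrection, h, hY, add_nonneg, hsymm.apply]

theorem sum_zeroPairs [Fintype ι] (Y : Matrix (ι ⊕ ι) (ι ⊕ ι) ℝ) :
    ∑ i, ∑ j, zeroPairs Y i j = ∑ i, ∑ j, Y i j := by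
  simp only [zeroPairs, Matrix.add_apply, Finset.sum_add_distrib, sum_pairCorrection, add_zero]

theorem Matrix.PosSemidef.zeroPairs [Fintype ι] {Y : Matrix (ι ⊕ ι) (ι ⊕ ι) ℝ} (hpsd : Y.PosSemidef)
    (hY : ∀ i j, 0 ≤ Y i j) : (zeroPairs Y).PosSemidef :=
  hpsd.add (posSemidef_pairCorrection fun _ => hY _ _)

theorem trace_fromBlocks_mul_le_zeroPairs [Fintype ι] {Q : Matrix ι ι ℝ} (hQ : ∀ i, 0 ≤ Q i i)
    {Y : Matrix (ι ⊕ ι) (ι ⊕ ι) ℝ} (hY : ∀ i j, 0 ≤ Y i j) :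
    trace (fromBlocks Q (-Q) (-Q) Q * Y) ≤ trace (fromBlocks Q (-Q) (-Q) Q * zeroPairs Y) := by
  rw [zeroPairs, mul_add, trace_add, trace_fromBlocks_mul_pairCorrection]
  have : 0 ≤ ∑ k, Q k k * Y (.inl k) (.inr k) :=
    Finset.sum_nonneg fun k _ => mul_nonneg (hQ k) (hY _ _)
  linarith

end PairCorrection

theorem exists_sum_eq_one_trace_mul_le {κ : Type*} [Fintype κ] [DecidableEq κ]
    (M : Matrix κ κ ℝ) {a : κ} (ha : 0 ≤ M a a) {Z : Matrix κ κ ℝ}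
    (hsum : ∑ i, ∑ j, Z i j ≤ 1) (hZ : ∀ i j, 0 ≤ Z i j) (hpsd : Z.PosSemidef) :
    ∃ Y : Matrix κ κ ℝ, ∑ i, ∑ j, Y i j = 1 ∧ (∀ i j, 0 ≤ Y i j) ∧ Y.PosSemidef ∧
      trace (M * Z) ≤ trace (M * Y) := by
  set s := 1 - ∑ i, ∑ j, Z i j
  have hs : 0 ≤ s := sub_nonneg.2 hsum
  refine ⟨Z + single a a s, ?_, fun i j => add_nonneg (hZ i j) ?_, ?_, ?_⟩
  · simp [s, Finset.sum_add_distrib, single_apply, ite_and, Finset.sum_ite_eq]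
  · rw [single_apply]
    positivity
  · rw [← diagonal_single]
    exact hpsd.add (PosSemidef.diagonal fun i => by by_cases h : i = a <;> simp [h, hs])
  · rw [mul_add, trace_add, trace_mul_single]
    simpa [mul_comm] using mul_nonneg hs ha

theorem stmt_9_general (n : ℕ) (Q : Matrix (Fin n) (Fin n) ℝ)
    (hdiag : ∀ i, 0 ≤ Q i i)
    (Qt : Matrix (Fin n ⊕ Fin n) (Fin n ⊕ Fin n) ℝ)
    (hQt : Qt = Matrix.fromBlocks Q (-Q) (-Q) Q)
    (v₁ v₂ : ℝ)
    (h₁ : IsGreatest {v : ℝ | ∃ Y : Matrix (Fin n ⊕ Fin n) (Fin n ⊕ Fin n) ℝ,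
        (∑ i, ∑ j, Y i j) = 1 ∧
        (∀ i j, 0 ≤ Y i j) ∧ Y.PosSemidef ∧
        v = Matrix.trace (Qt * Y)} v₁)
    (h₂ : IsGreatest {v : ℝ | ∃ Y : Matrix (Fin n ⊕ Fin n) (Fin n ⊕ Fin n) ℝ,
        (∑ i, ∑ j, Y i j) ≤ 1 ∧
        (∀ i : Fin n, Y (Sum.inl i) (Sum.inr i) = 0) ∧
        (∀ i j, 0 ≤ Y i j) ∧ Y.PosSemidef ∧
        v = Matrix.trace (Qt * Y)} v₂) :
    v₁ = v₂ := by
  obtain ⟨⟨Y, hYsum, hYnn, hYpsd, rfl⟩, hub₁⟩ := h₁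
  obtain ⟨⟨Z, hZsum, -, hZnn, hZpsd, rfl⟩, hub₂⟩ := h₂
  subst hQt
  apply le_antisymm
  · refine (trace_fromBlocks_mul_le_zeroPairs hdiag hYnn).trans (hub₂ ⟨_, ?_, zeroPairs_inl_inr Y,
      zeroPairs_nonneg hYpsd.isHermitian hYnn, hYpsd.zeroPairs hYnn, rfl⟩)
    exact (sum_zeroPairs Y).trans_le hYsum.le
  · obtain ⟨a, -, -⟩ := Finset.exists_ne_zero_of_sum_ne_zero (hYsum ▸ one_ne_zero)
    have ha : 0 ≤ fromBlocks Q (-Q) (-Q) Q a a := by rcases a with a | a <;> simp [hdiag]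
    obtain ⟨Y', hsum', hnn', hpsd', hle⟩ := exists_sum_eq_one_trace_mul_le _ ha hZsum hZnn hZpsd
    exact hle.trans (hub₁ ⟨Y', hsum', hnn', hpsd', rfl⟩)

theorem stmt_9 (n : ℕ) (Q : Matrix (Fin n) (Fin n) ℝ) (hQsym : Q.IsSymm)
    (hdiag : ∀ i, 0 ≤ Q i i)
    (Qt : Matrix (Fin n ⊕ Fin n) (Fin n ⊕ Fin n) ℝ)
    (hQt : Qt = Matrix.fromBlocks Q (-Q) (-Q) Q)
    (v₁ v₂ : ℝ)
    (h₁ : IsGreatest {v : ℝ | ∃ Y : Matrix (Fin n ⊕ Fin n) (Fin n ⊕ Fin n) ℝ,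
        (∑ i, ∑ j, Y i j) = 1 ∧
        (∀ i j, 0 ≤ Y i j) ∧ Y.PosSemidef ∧
        v = Matrix.trace (Qt * Y)} v₁)
    (h₂ : IsGreatest {v : ℝ | ∃ Y : Matrix (Fin n ⊕ Fin n) (Fin n ⊕ Fin n) ℝ,
        (∑ i, ∑ j, Y i j) ≤ 1 ∧
        (∀ i : Fin n, Y (Sum.inl i) (Sum.inr i) = 0) ∧
        (∀ i j, 0 ≤ Y i j) ∧ Y.PosSemidef ∧
        v = Matrix.trace (Qt * Y)} v₂) :
    v₁ = v₂ :=
  stmt_9_general n Q hdiag Qt hQt v₁ v₂ h₁ h₂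
end

section
/- The set {x ∈ ℝⁿ : ‖x‖₂ = 1, ‖x‖₁² ≤ k} equals {√k · A y : y ∈ ℝ^{2n}, k·yᵀAᵀAy = 1, eᵀy ≤ 1, y ≥ 0, y_i y_{n+i} = 0 for i = 1,...,n}, where A = [I, -I] and k ≥ 1. -/
/-!
Since `A = [I, -I]` sends `y` to `y_top - y_bot`, a point `x` of the sphere is recovered from
`y = (x⁺, x⁻) / √k`, whose entries are nonnegative, complementary and sum to `‖x‖₁ / √k`.
Conversely `‖A y‖₁ ≤ eᵀ y` for `y ≥ 0`, and `k ‖A y‖₂² = 1` says exactly that `√k • A y`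
has unit Euclidean norm.
-/

open Matrix

section SignSplit

variable {ι R : Type*} [Fintype ι] [Ring R]

lemma fromCols_one_neg_one_mulVec [DecidableEq ι] (y : ι ⊕ ι → R) :
    fromCols (1 : Matrix ι ι R) (-1) *ᵥ y = y ∘ Sum.inl - y ∘ Sum.inr := by
  rw [fromCols_mulVec, one_mulVec, neg_mulVec, one_mulVec, sub_eq_add_neg]

variable [LinearOrder R] [IsOrderedRing R]

lemma sum_abs_fromCols_one_neg_one_mulVec_le [DecidableEq ι] {y : ι ⊕ ι → R}
    (hy : ∀ j, 0 ≤ y j) : ∑ i, |(fromCols (1 : Matrix ι ι R) (-1) *ᵥ y) i| ≤ ∑ j, y j := by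
  rw [fromCols_one_neg_one_mulVec, Fintype.sum_sum_type, ← Finset.sum_add_distrib]
  refine Finset.sum_le_sum fun i _ => (abs_sub _ _).trans_eq ?_
  simp [abs_of_nonneg (hy _)]

lemma fromCols_one_neg_one_mulVec_sumElim_posPart_negPart [DecidableEq ι] (x : ι → R) :
    fromCols (1 : Matrix ι ι R) (-1) *ᵥ Sum.elim x⁺ x⁻ = x := by
  rw [fromCols_one_neg_one_mulVec, Sum.elim_comp_inl, Sum.elim_comp_inr, posPart_sub_negPart]

lemma sum_sumElim_posPart_negPart (x : ι → R) : ∑ j, Sum.elim x⁺ x⁻ j = ∑ i, |x i| := by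
  simp [Fintype.sum_sum_type, ← Finset.sum_add_distrib, posPart_add_negPart]

lemma posPart_mul_negPart_eq_zero (a : R) : a⁺ * a⁻ = 0 := by
  rcases le_total a 0 with h | h
  · simp [posPart_eq_zero.2 h]
  · simp [negPart_eq_zero.2 h]

end SignSplit

lemma dotProduct_transpose_mul_mulVec {m n R : Type*} [Fintype m] [Fintype n] [CommSemiring R]
    (A : Matrix m n R) (y : n → R) : y ⬝ᵥ (Aᵀ * A) *ᵥ y = (A *ᵥ y) ⬝ᵥ (A *ᵥ y) := by
  rw [← mulVec_mulVec, dotProduct_transpose_mulVec]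

lemma sum_sq_sqrt_smul {ι : Type*} [Fintype ι] {k : ℝ} (hk : 0 ≤ k) (v : ι → ℝ) :
    ∑ i, (√k • v) i ^ 2 = k * (v ⬝ᵥ v) := by
  rw [dotProduct, Finset.mul_sum]
  refine Finset.sum_congr rfl fun i _ => ?_
  rw [Pi.smul_apply, smul_eq_mul, mul_pow, Real.sq_sqrt hk, sq]

lemma sq_sum_abs_sqrt_smul_fromCols_one_neg_one_mulVec_le {ι : Type*} [Fintype ι]
    [DecidableEq ι] {k : ℝ} (hk : 0 ≤ k) {y : ι ⊕ ι → ℝ} (hy : ∀ j, 0 ≤ y j)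
    (hsum : ∑ j, y j ≤ 1) :
    (∑ i, |(√k • (fromCols (1 : Matrix ι ι ℝ) (-1) *ᵥ y)) i|) ^ 2 ≤ k :=
  calc (∑ i, |(√k • (fromCols (1 : Matrix ι ι ℝ) (-1) *ᵥ y)) i|) ^ 2
      = k * (∑ i, |(fromCols (1 : Matrix ι ι ℝ) (-1) *ᵥ y) i|) ^ 2 := by
        simp [abs_mul, abs_of_nonneg (Real.sqrt_nonneg k), ← Finset.mul_sum, mul_pow,
          Real.sq_sqrt hk]
    _ ≤ k * 1 ^ 2 := by
        gcongr
        exact (sum_abs_fromCols_one_neg_one_mulVec_le hy).trans hsum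
    _ = k := by ring

theorem stmt_17 (n : ℕ) (k : ℝ) (hk : 1 ≤ k)
    (A : Matrix (Fin n) (Fin n ⊕ Fin n) ℝ)
    (hA : A = Matrix.fromCols (1 : Matrix (Fin n) (Fin n) ℝ) (-1 : Matrix (Fin n) (Fin n) ℝ)) :
    {x : Fin n → ℝ | (∑ i, (x i) ^ 2) = 1 ∧ (∑ i, |x i|) ^ 2 ≤ k} =
      {x : Fin n → ℝ | ∃ y : Fin n ⊕ Fin n → ℝ,
        x = Real.sqrt k • (A *ᵥ y) ∧
        k * (y ⬝ᵥ (Aᵀ * A) *ᵥ y) = 1 ∧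
        (∑ j, y j) ≤ 1 ∧
        (∀ j, 0 ≤ y j) ∧
        ∀ i : Fin n, y (Sum.inl i) * y (Sum.inr i) = 0} := by
  have hk0 : 0 < k := by linarith
  have hs : 0 < √k := Real.sqrt_pos.2 hk0
  subst hA
  ext x
  constructor
  · rintro ⟨hx2, hx1⟩
    refine ⟨(√k)⁻¹ • Sum.elim x⁺ x⁻, ?_, ?_, ?_, fun j => ?_, fun i => ?_⟩
    · rw [mulVec_smul, fromCols_one_neg_one_mulVec_sumElim_posPart_negPart, smul_inv_smul₀ hs.ne']
    · rw [dotProduct_transpose_mul_mulVec, mulVec_smul,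
        fromCols_one_neg_one_mulVec_sumElim_posPart_negPart, ← sum_sq_sqrt_smul hk0.le,
        smul_inv_smul₀ hs.ne', hx2]
    · simp only [Pi.smul_apply, smul_eq_mul, ← Finset.mul_sum]
      rw [sum_sumElim_posPart_negPart, inv_mul_le_iff₀ hs, mul_one]
      exact Real.le_sqrt_of_sq_le hx1
    · refine smul_nonneg (inv_nonneg.2 hs.le) ?_
      rcases j with i | i
      exacts [posPart_nonneg (x i), negPart_nonneg (x i)]
    · simp only [Pi.smul_apply, Sum.elim_inl, Sum.elim_inr, smul_mul_smul_comm, Pi.posPart_apply,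
        Pi.negPart_apply, posPart_mul_negPart_eq_zero, smul_zero]
  · rintro ⟨y, rfl, hq, hsum, hy, -⟩
    refine ⟨?_, sq_sum_abs_sqrt_smul_fromCols_one_neg_one_mulVec_le hk0.le hy hsum⟩
    rw [sum_sq_sqrt_smul hk0.le, ← dotProduct_transpose_mul_mulVec, hq]
end

section
/- Let Q be symmetric and suppose the maximum of xᵀQx over {‖x‖₂ = 1, ‖x‖₁² ≤ k} is strictly less than λ_max(Q). Then every maximizer x* of this problem satisfies ‖x*‖₁² = k; i.e., the optimal value equals the maximum of xᵀQx over {‖x‖₂ = 1, ‖x‖₁² = k}. -/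
/-!
If a maximiser `x` had `‖x‖₁² < k`, it would lie in the interior of the cone
`{y | ‖y‖₁² ≤ k ‖y‖₂²}`, on which `yᵀQy ≤ m ‖y‖₂²` by homogeneity. Hence `x` is a local maximum
of the quadratic form `g y = yᵀ(Q - m I)y`. A quadratic form with a local maximum is nonpositive
everywhere, because `g (x + u) + g (x - u) = 2 g x + 2 g u`; so `Q ≤ m I` and `λ_max(Q) ≤ m`.
-/

open Matrix Filter Topology

namespace Matrix

variable {ι : Type*} [Fintype ι]

theorem add_dotProduct_mulVec_add_add_sub {R : Type*} [CommRing R] (A : Matrix ι ι R)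
    (x u : ι → R) :
    (x + u) ⬝ᵥ A *ᵥ (x + u) + (x - u) ⬝ᵥ A *ᵥ (x - u) =
      2 * (x ⬝ᵥ A *ᵥ x) + 2 * (u ⬝ᵥ A *ᵥ u) := by
  simp only [mulVec_add, mulVec_sub, dotProduct_add, dotProduct_sub, add_dotProduct,
    sub_dotProduct]
  ring

theorem dotProduct_mulVec_self_nonpos_of_isLocalMax {A : Matrix ι ι ℝ} {x : ι → ℝ}
    (h : IsLocalMax (fun y ↦ y ⬝ᵥ A *ᵥ y) x) (w : ι → ℝ) : w ⬝ᵥ A *ᵥ w ≤ 0 := by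
  have h_near_zero : ∀ᶠ u in 𝓝 0, u ⬝ᵥ A *ᵥ u ≤ 0 := by
    have h_add : ∀ᶠ u in 𝓝 (0 : ι → ℝ), (x + u) ⬝ᵥ A *ᵥ (x + u) ≤ x ⬝ᵥ A *ᵥ x :=
      ((continuous_const.add continuous_id).tendsto' 0 x (add_zero x)).eventually h
    have h_sub : ∀ᶠ u in 𝓝 (0 : ι → ℝ), (x - u) ⬝ᵥ A *ᵥ (x - u) ≤ x ⬝ᵥ A *ᵥ x :=
      ((continuous_const.sub continuous_id).tendsto' 0 x (sub_zero x)).eventually h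
    filter_upwards [h_add, h_sub] with u hu_add hu_sub
    linarith [add_dotProduct_mulVec_add_add_sub A x u]
  have h_scaled : ∀ᶠ t in 𝓝[≠] (0 : ℝ), t ^ 2 * (w ⬝ᵥ A *ᵥ w) ≤ 0 := by
    have : Tendsto (fun t : ℝ ↦ t • w) (𝓝[≠] 0) (𝓝 0) :=
      ((continuous_id.smul continuous_const).tendsto' 0 0 (zero_smul ℝ w)).mono_left
        nhdsWithin_le_nhds
    filter_upwards [this.eventually h_near_zero] with t ht
    simpa only [mulVec_smul, dotProduct_smul, smul_dotProduct, smul_eq_mul, ← mul_assoc,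
      ← sq] using ht
  obtain ⟨t, ht, ht0⟩ := (h_scaled.and self_mem_nhdsWithin).exists
  exact nonpos_of_mul_nonpos_right ht (sq_pos_of_ne_zero ht0)

theorem IsHermitian.eigenvalues_le [DecidableEq ι] {A : Matrix ι ι ℝ} (hA : A.IsHermitian)
    {c : ℝ} (h : ∀ v, v ⬝ᵥ (A - c • 1) *ᵥ v ≤ 0) (i : ι) : hA.eigenvalues i ≤ c := by
  set v : ι → ℝ := ⇑(hA.eigenvectorBasis i)
  have hv : v ≠ 0 := by simpa [v] using hA.eigenvectorBasis.orthonormal.ne_zero i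
  have hvv : 0 < v ⬝ᵥ v := by simpa using dotProduct_star_self_pos_iff.mpr hv
  have := h v
  rw [sub_mulVec, smul_mulVec, one_mulVec, hA.mulVec_eigenvectorBasis, ← sub_smul,
    dotProduct_smul, smul_eq_mul] at this
  exact sub_nonpos.mp (nonpos_of_mul_nonpos_left this hvv)

theorem dotProduct_sub_smul_one_mulVec [DecidableEq ι] (A : Matrix ι ι ℝ) (m : ℝ)
    (y : ι → ℝ) : y ⬝ᵥ (A - m • 1) *ᵥ y = y ⬝ᵥ A *ᵥ y - m * ∑ i, y i ^ 2 := by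
  rw [sub_mulVec, smul_mulVec, one_mulVec, dotProduct_sub, dotProduct_smul, smul_eq_mul]
  simp only [dotProduct, sq]

theorem dotProduct_mulVec_le_of_sq_sum_abs_le {A : Matrix ι ι ℝ} {k m : ℝ}
    (hm : ∀ x : ι → ℝ, ∑ i, x i ^ 2 = 1 → (∑ i, |x i|) ^ 2 ≤ k → x ⬝ᵥ A *ᵥ x ≤ m)
    {y : ι → ℝ} (hy : (∑ i, |y i|) ^ 2 ≤ k * ∑ i, y i ^ 2) :
    y ⬝ᵥ A *ᵥ y ≤ m * ∑ i, y i ^ 2 := by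
  set s := ∑ i, y i ^ 2
  rcases (Finset.sum_nonneg fun i _ ↦ sq_nonneg (y i) : 0 ≤ s).eq_or_lt with hs | hs
  · have hy0 : y = 0 := funext fun i ↦ by
      simpa using (Finset.sum_eq_zero_iff_of_nonneg fun i _ ↦ sq_nonneg (y i)).mp hs.symm i
        (Finset.mem_univ i)
    simp [hy0, s]
  set c := (√s)⁻¹
  have hc : 0 < c := by positivity
  have hc2 : c ^ 2 * s = 1 := by
    rw [inv_pow, Real.sq_sqrt hs.le, inv_mul_cancel₀ hs.ne']
  have hcy := hm (c • y)
    (by simp only [Pi.smul_apply, smul_eq_mul, mul_pow, ← Finset.mul_sum]; exact hc2)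
    (by
      simp only [Pi.smul_apply, smul_eq_mul, abs_mul, abs_of_pos hc, ← Finset.mul_sum, mul_pow]
      calc c ^ 2 * (∑ i, |y i|) ^ 2 ≤ c ^ 2 * (k * s) := by gcongr
        _ = k := by rw [mul_left_comm, hc2, mul_one])
  simp only [mulVec_smul, dotProduct_smul, smul_dotProduct, smul_eq_mul, ← mul_assoc,
    ← sq] at hcy
  calc y ⬝ᵥ A *ᵥ y = s * (c ^ 2 * (y ⬝ᵥ A *ᵥ y)) := by
        rw [← mul_assoc, mul_comm s, hc2, one_mul]
    _ ≤ s * m := by gcongr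
    _ = m * s := mul_comm _ _

theorem isLocalMax_dotProduct_sub_smul_one_mulVec [DecidableEq ι] {A : Matrix ι ι ℝ}
    {k m : ℝ} (hm : ∀ x : ι → ℝ, ∑ i, x i ^ 2 = 1 → (∑ i, |x i|) ^ 2 ≤ k → x ⬝ᵥ A *ᵥ x ≤ m)
    {x : ι → ℝ} (hx : ∑ i, x i ^ 2 = 1) (hxk : (∑ i, |x i|) ^ 2 < k) (hxm : x ⬝ᵥ A *ᵥ x = m) :
    IsLocalMax (fun y ↦ y ⬝ᵥ (A - m • 1) *ᵥ y) x := by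
  have h_open : IsOpen {y : ι → ℝ | (∑ i, |y i|) ^ 2 < k * ∑ i, y i ^ 2} :=
    isOpen_lt (by fun_prop) (by fun_prop)
  have h_cone : {y : ι → ℝ | (∑ i, |y i|) ^ 2 < k * ∑ i, y i ^ 2} ∈ 𝓝 x :=
    h_open.mem_nhds (by simpa [hx] using hxk)
  filter_upwards [h_cone] with y hy
  simp only [dotProduct_sub_smul_one_mulVec, hx, hxm, mul_one, sub_self, sub_nonpos]
  exact dotProduct_mulVec_le_of_sq_sum_abs_le hm hy.le

end Matrix

theorem stmt_18_general (n : ℕ)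
    (Q : Matrix (Fin n) (Fin n) ℝ) (hQ : Q.IsHermitian)
    (k : ℝ)
    (m : ℝ)
    (hm : IsGreatest {v : ℝ | ∃ x : Fin n → ℝ,
        (∑ i, (x i) ^ 2) = 1 ∧ (∑ i, |x i|) ^ 2 ≤ k ∧ v = x ⬝ᵥ Q *ᵥ x} m)
    (hlt : m < ⨆ i, hQ.eigenvalues i) :
    (∀ x : Fin n → ℝ, (∑ i, (x i) ^ 2) = 1 → (∑ i, |x i|) ^ 2 ≤ k →
      x ⬝ᵥ Q *ᵥ x = m → (∑ i, |x i|) ^ 2 = k) ∧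
    IsGreatest {v : ℝ | ∃ x : Fin n → ℝ,
        (∑ i, (x i) ^ 2) = 1 ∧ (∑ i, |x i|) ^ 2 = k ∧ v = x ⬝ᵥ Q *ᵥ x} m := by
  have h_le : ∀ x : Fin n → ℝ, ∑ i, x i ^ 2 = 1 → (∑ i, |x i|) ^ 2 ≤ k → x ⬝ᵥ Q *ᵥ x ≤ m :=
    fun x hx hxk ↦ hm.2 ⟨x, hx, hxk, rfl⟩
  have h_tight : ∀ x : Fin n → ℝ, (∑ i, (x i) ^ 2) = 1 → (∑ i, |x i|) ^ 2 ≤ k →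
      x ⬝ᵥ Q *ᵥ x = m → (∑ i, |x i|) ^ 2 = k := by
    intro x hx hxk hxm
    by_contra hne
    have h_nonpos := dotProduct_mulVec_self_nonpos_of_isLocalMax
      (isLocalMax_dotProduct_sub_smul_one_mulVec h_le hx (hxk.lt_of_ne hne) hxm)
    have : Nonempty (Fin n) := by
      obtain ⟨i, -, -⟩ := Finset.exists_ne_zero_of_sum_ne_zero (hx.trans_ne one_ne_zero)
      exact ⟨i⟩
    obtain ⟨i, hi⟩ := exists_lt_of_lt_ciSup hlt
    exact hi.not_ge (hQ.eigenvalues_le h_nonpos i)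
  refine ⟨h_tight, ?_, fun v ⟨x, hx, hxk, hv⟩ ↦ hv ▸ h_le x hx hxk.le⟩
  obtain ⟨x, hx, hxk, hv⟩ := hm.1
  exact ⟨x, hx, h_tight x hx hxk hv.symm, hv⟩

theorem stmt_18 (n : ℕ) (hn : 0 < n)
    (Q : Matrix (Fin n) (Fin n) ℝ) (hQ : Q.IsHermitian)
    (k : ℝ) (hk1 : 1 ≤ k) (hkn : k ≤ n)
    (m : ℝ)
    (hm : IsGreatest {v : ℝ | ∃ x : Fin n → ℝ,
        (∑ i, (x i) ^ 2) = 1 ∧ (∑ i, |x i|) ^ 2 ≤ k ∧ v = x ⬝ᵥ Q *ᵥ x} m)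
    (hlt : m < ⨆ i, hQ.eigenvalues i) :
    (∀ x : Fin n → ℝ, (∑ i, (x i) ^ 2) = 1 → (∑ i, |x i|) ^ 2 ≤ k →
      x ⬝ᵥ Q *ᵥ x = m → (∑ i, |x i|) ^ 2 = k) ∧
    IsGreatest {v : ℝ | ∃ x : Fin n → ℝ,
        (∑ i, (x i) ^ 2) = 1 ∧ (∑ i, |x i|) ^ 2 = k ∧ v = x ⬝ᵥ Q *ᵥ x} m :=
  stmt_18_general n Q hQ k m hm hlt
end
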